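/- arXiv:1112.2603 — 6 statements merged into one kernel-verified Lean document; each statement's English description precedes it below -/
import Mathlib

section
/- Let A ∈ ℝ^{k×k} and let Q ∈ O(k) be chosen uniformly at random (with respect to Haar measure). Then for every subset J ⊆ [k] with |J| = ℓ, the expectation E_Q[prm_J(Q^T A Q)] equals σ_ℓ(A) / C(k,ℓ), where σ_ℓ(A) is the sum of all ℓ×ℓ principal minors of A. -/
open Finset Matrix MeasureTheory

/-- The principal minor of `A` on the index set `J`. -/
noncomputable def prm {k : ℕ} (A : Matrix (Fin k) (Fin k) ℝ) (J : Finset (Fin k)) : ℝ :=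
  (A.submatrix (fun i : {x // x ∈ J} => (i : Fin k)) (fun i : {x // x ∈ J} => (i : Fin k))).det

instance {k : ℕ} : MeasurableSpace (Matrix (Fin k) (Fin k) ℝ) :=
  inferInstanceAs (MeasurableSpace (Fin k → Fin k → ℝ))

/-!
The coefficient of `Xˡ` in `det (1 + X • A)` is `σ_ℓ(A)`, and this determinant is invariant under
orthogonal conjugation, so `σ_ℓ(Qᵀ A Q) = σ_ℓ(A)` and the expectations of the `C(k, ℓ)` principal
minors of size `ℓ` add up to `σ_ℓ(A)`. They are all equal: conjugating by a permutation matrix `P`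
permutes the principal minors, and a left-invariant probability measure on a group is also
right-invariant, so replacing `Q` by `Q P` does not change the expectation.
-/

section Algebra

open Polynomial in
theorem Matrix.det_one_add_X_smul_conj {n R : Type*} [Fintype n] [DecidableEq n] [CommRing R]
    (A U V : Matrix n n R) (hVU : V * U = 1) :
    det (1 + (X : R[X]) • (V * A * U).map C) = det (1 + (X : R[X]) • A.map C) := by
  have hVU' : V.map C * U.map (C : R →+* R[X]) = 1 := by
    rw [← Matrix.map_mul, hVU, Matrix.map_one _ (map_zero C) (map_one C)]
  have hconj : 1 + (X : R[X]) • (V * A * U).map C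
      = V.map C * (1 + (X : R[X]) • A.map C) * U.map C := by
    rw [Matrix.map_mul, Matrix.map_mul, Matrix.mul_add, Matrix.add_mul, Matrix.mul_one, hVU',
      Matrix.mul_smul, Matrix.smul_mul]
  rw [hconj, det_mul, det_mul, mul_right_comm, ← det_mul, hVU', det_one, one_mul]

variable {k : ℕ}

theorem sum_prm_conj (ℓ : ℕ) (A U V : Matrix (Fin k) (Fin k) ℝ) (hVU : V * U = 1) :
    ∑ I ∈ (univ : Finset (Fin k)).powersetCard ℓ, prm (V * A * U) I
      = ∑ I ∈ (univ : Finset (Fin k)).powersetCard ℓ, prm A I := by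
  simp only [prm, ← coeff_det_one_add_X_smul_eq_sum_minors, det_one_add_X_smul_conj A U V hVU]

theorem prm_submatrix_perm (B : Matrix (Fin k) (Fin k) ℝ) (σ : Equiv.Perm (Fin k))
    (J : Finset (Fin k)) : prm (B.submatrix σ σ) J = prm B (J.map σ.toEmbedding) := by
  let e : {x // x ∈ J} ≃ {x // x ∈ J.map σ.toEmbedding} := σ.subtypeEquiv fun a => by simp
  rw [prm, prm, ← det_submatrix_equiv_self e]
  rfl

theorem prm_permMatrix_mul_mul_transpose (B : Matrix (Fin k) (Fin k) ℝ) (σ : Equiv.Perm (Fin k))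
    (J : Finset (Fin k)) :
    prm (σ.permMatrix ℝ * B * (σ.permMatrix ℝ)ᵀ) J = prm B (J.map σ.toEmbedding) := by
  rw [transpose_permMatrix, PEquiv.toMatrix_toPEquiv_mul, PEquiv.mul_toMatrix_toPEquiv,
    submatrix_submatrix, Equiv.Perm.inv_def, Equiv.symm_symm]
  exact prm_submatrix_perm B σ J

theorem Finset.exists_perm_map_eq {α : Type*} [Fintype α] [DecidableEq α] {s t : Finset α}
    (h : s.card = t.card) : ∃ σ : Equiv.Perm α, s.map σ.toEmbedding = t := by
  let e : {x // x ∈ s} ≃ {x // x ∈ t} := Fintype.equivOfCardEq (by simpa using h)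
  refine ⟨e.extendSubtype, eq_of_subset_of_card_le (fun y hy => ?_) (by simp [h])⟩
  obtain ⟨x, hx, rfl⟩ := mem_map.mp hy
  exact e.extendSubtype_mem x hx

theorem Matrix.permMatrix_mem_orthogonalGroup {n R : Type*} [Fintype n] [DecidableEq n]
    [CommRing R] (σ : Equiv.Perm n) : σ.permMatrix R ∈ orthogonalGroup n R := by
  rw [mem_orthogonalGroup_iff, transpose_permMatrix, ← permMatrix_mul, inv_mul_cancel,
    permMatrix_one]

end Algebra

section Analysis

theorem MeasureTheory.Measure.isMulRightInvariant_of_isMulLeftInvariant {G : Type*}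
    [MeasurableSpace G] [Group G] [MeasurableMul₂ G] [MeasurableInv G] (μ : Measure G)
    [IsFiniteMeasure μ] [μ.IsMulLeftInvariant] : μ.IsMulRightInvariant := by
  refine ⟨fun g => ?_⟩
  rcases eq_zero_or_neZero μ with rfl | hμ
  · simp
  have hmass : μ.map (· * g) Set.univ = μ Set.univ := by
    rw [Measure.map_apply (measurable_mul_const g) MeasurableSet.univ, Set.preimage_univ]
  -- left-invariant measures are proportional, and `μ.map (· * g)` is left-invariant
  rw [measure_eq_div_smul (μ.map (· * g)) μ (NeZero.ne (μ Set.univ)) (measure_ne_top _ _),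
    hmass, ENNReal.div_self (NeZero.ne _) (measure_ne_top _ _), one_smul]

instance Matrix.secondCountableTopology {m n R : Type*} [Countable m] [Countable n]
    [TopologicalSpace R] [SecondCountableTopology R] : SecondCountableTopology (Matrix m n R) :=
  inferInstanceAs (SecondCountableTopology (m → n → R))

instance Unitary.secondCountableTopology {R : Type*} [Monoid R] [StarMul R] [TopologicalSpace R]
    [SecondCountableTopology R] : SecondCountableTopology (unitary R) :=
  TopologicalSpace.secondCountableTopology_induced _ _ Subtype.val

theorem Matrix.isCompact_unitaryGroup {n 𝕜 : Type*} [Fintype n] [DecidableEq n] [RCLike 𝕜] :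
    IsCompact (unitaryGroup n 𝕜 : Set (Matrix n n 𝕜)) := by
  have hball : IsCompact (Set.univ.pi fun _ : n => Set.univ.pi fun _ : n =>
      Metric.closedBall (0 : 𝕜) 1) :=
    isCompact_univ_pi fun _ => isCompact_univ_pi fun _ => isCompact_closedBall _ _
  refine hball.of_isClosed_subset (isClosed_unitary (R := Matrix n n 𝕜)) fun U hU i _ j _ => ?_
  simpa using entry_norm_bound_of_unitary hU i j

instance Matrix.compactSpace_unitaryGroup {n 𝕜 : Type*} [Fintype n] [DecidableEq n] [RCLike 𝕜] :
    CompactSpace (unitaryGroup n 𝕜) :=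
  isCompact_iff_compactSpace.mp isCompact_unitaryGroup

variable {k : ℕ}

instance : BorelSpace (Matrix (Fin k) (Fin k) ℝ) :=
  inferInstanceAs (BorelSpace (Fin k → Fin k → ℝ))

theorem continuous_prm (J : Finset (Fin k)) :
    Continuous fun A : Matrix (Fin k) (Fin k) ℝ => prm A J :=
  (continuous_id.matrix_submatrix _ _).matrix_det

theorem integrable_prm_conj (A : Matrix (Fin k) (Fin k) ℝ) (J : Finset (Fin k))
    (μ : Measure (orthogonalGroup (Fin k) ℝ)) [IsFiniteMeasure μ] :
    Integrable (fun Q : orthogonalGroup (Fin k) ℝ =>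
      prm ((Q : Matrix (Fin k) (Fin k) ℝ)ᵀ * A * (Q : Matrix (Fin k) (Fin k) ℝ)) J) μ :=
  ((continuous_prm J).comp (by fun_prop)).integrable_of_hasCompactSupport (.of_compactSpace _)

theorem integral_prm_conj_map_perm (A : Matrix (Fin k) (Fin k) ℝ)
    (μ : Measure (orthogonalGroup (Fin k) ℝ)) [μ.IsMulRightInvariant] (σ : Equiv.Perm (Fin k))
    (J : Finset (Fin k)) :
    ∫ Q : orthogonalGroup (Fin k) ℝ,
        prm ((Q : Matrix (Fin k) (Fin k) ℝ)ᵀ * A * (Q : Matrix (Fin k) (Fin k) ℝ))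
          (J.map σ.toEmbedding) ∂μ
      = ∫ Q : orthogonalGroup (Fin k) ℝ,
          prm ((Q : Matrix (Fin k) (Fin k) ℝ)ᵀ * A * (Q : Matrix (Fin k) (Fin k) ℝ)) J ∂μ := by
  let P : orthogonalGroup (Fin k) ℝ := ⟨(σ.permMatrix ℝ)ᵀ, by
    rw [transpose_permMatrix]
    exact permMatrix_mem_orthogonalGroup σ⁻¹⟩
  have hP : ∀ Q : orthogonalGroup (Fin k) ℝ,
      prm (((Q * P : orthogonalGroup (Fin k) ℝ) : Matrix (Fin k) (Fin k) ℝ)ᵀ * A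
        * ((Q * P : orthogonalGroup (Fin k) ℝ) : Matrix (Fin k) (Fin k) ℝ)) J
      = prm ((Q : Matrix (Fin k) (Fin k) ℝ)ᵀ * A * (Q : Matrix (Fin k) (Fin k) ℝ))
          (J.map σ.toEmbedding) := fun Q => by
    rw [← prm_permMatrix_mul_mul_transpose]
    simp only [Submonoid.coe_mul, transpose_mul, transpose_transpose, P, Matrix.mul_assoc]
  simp_rw [← hP]
  exact integral_mul_right_eq_self (fun Q : orthogonalGroup (Fin k) ℝ =>
    prm ((Q : Matrix (Fin k) (Fin k) ℝ)ᵀ * A * (Q : Matrix (Fin k) (Fin k) ℝ)) J) P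

theorem integral_sum_prm_conj (ℓ : ℕ) (A : Matrix (Fin k) (Fin k) ℝ)
    (μ : Measure (orthogonalGroup (Fin k) ℝ)) [IsProbabilityMeasure μ] :
    ∑ I ∈ (univ : Finset (Fin k)).powersetCard ℓ, ∫ Q : orthogonalGroup (Fin k) ℝ,
        prm ((Q : Matrix (Fin k) (Fin k) ℝ)ᵀ * A * (Q : Matrix (Fin k) (Fin k) ℝ)) I ∂μ
      = ∑ I ∈ (univ : Finset (Fin k)).powersetCard ℓ, prm A I := by
  have hσ : ∀ Q : orthogonalGroup (Fin k) ℝ,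
      ∑ I ∈ (univ : Finset (Fin k)).powersetCard ℓ,
        prm ((Q : Matrix (Fin k) (Fin k) ℝ)ᵀ * A * (Q : Matrix (Fin k) (Fin k) ℝ)) I
      = ∑ I ∈ (univ : Finset (Fin k)).powersetCard ℓ, prm A I :=
    fun Q => sum_prm_conj ℓ A _ _ ((mem_orthogonalGroup_iff' (Fin k) ℝ).mp Q.2)
  rw [← integral_finsetSum _ fun I _ => integrable_prm_conj A I μ]
  simp only [hσ, integral_const, probReal_univ, one_smul]

end Analysis
/-- `μ` stands for the Haar probability measure on `O(k)`, encoded as a left-invariant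
probability measure. -/
theorem expectation_principal_minor {k ℓ : ℕ} (A : Matrix (Fin k) (Fin k) ℝ)
    (μ : Measure (Matrix.orthogonalGroup (Fin k) ℝ)) [IsProbabilityMeasure μ]
    (hinv : ∀ Q₀ : Matrix.orthogonalGroup (Fin k) ℝ,
      Measure.map (fun Q => Q₀ * Q) μ = μ)
    (J : Finset (Fin k)) (hJ : J.card = ℓ) :
    ∫ Q : Matrix.orthogonalGroup (Fin k) ℝ,
        prm ((Q : Matrix (Fin k) (Fin k) ℝ)ᵀ * A * (Q : Matrix (Fin k) (Fin k) ℝ)) J ∂μ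
      = (∑ I ∈ (univ : Finset (Fin k)).powersetCard ℓ, prm A I) / (k.choose ℓ) := by
  have : μ.IsMulLeftInvariant := ⟨hinv⟩
  have : μ.IsMulRightInvariant := μ.isMulRightInvariant_of_isMulLeftInvariant
  have hequal : ∀ I ∈ (univ : Finset (Fin k)).powersetCard ℓ,
      ∫ Q : orthogonalGroup (Fin k) ℝ,
        prm ((Q : Matrix (Fin k) (Fin k) ℝ)ᵀ * A * (Q : Matrix (Fin k) (Fin k) ℝ)) I ∂μ
      = ∫ Q : orthogonalGroup (Fin k) ℝ,
        prm ((Q : Matrix (Fin k) (Fin k) ℝ)ᵀ * A * (Q : Matrix (Fin k) (Fin k) ℝ)) J ∂μ := by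
    intro I hI
    obtain ⟨σ, rfl⟩ := exists_perm_map_eq (hJ.trans (mem_powersetCard.mp hI).2.symm)
    exact integral_prm_conj_map_perm A μ σ J
  have hsum := integral_sum_prm_conj ℓ A μ
  rw [sum_congr rfl hequal, sum_const, card_powersetCard, card_univ, Fintype.card_fin,
    nsmul_eq_mul] at hsum
  have hℓ : ℓ ≤ k := hJ ▸ card_le_univ J |>.trans_eq (Fintype.card_fin k)
  rw [← hsum, mul_div_cancel_left₀ _ (Nat.cast_ne_zero.mpr (Nat.choose_pos hℓ).ne')]
end

section
/- For x > 0, the Gamma function satisfies Γ(x + 1/2) < √x · Γ(x). -/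
open Real Set MeasureTheory

private lemma gamma_sq_lt (x : ℝ) (hx : 0 < x) :
    Gamma (x + 1 / 2) ^ 2 < Gamma x * Gamma (x + 1) := by
  set c : ℝ := Gamma (x + 1 / 2) / Gamma x with hc
  have hΓx : 0 < Gamma x := Gamma_pos_of_pos hx
  have hΓh : 0 < Gamma (x + 1 / 2) := Gamma_pos_of_pos (by linarith)
  have hcpos : 0 < c := div_pos hΓh hΓx
  -- integrability facts
  have I1 := Real.GammaIntegral_convergent hx
  have I2 := Real.GammaIntegral_convergent (show (0:ℝ) < x + 1/2 by linarith)
  have I3 := Real.GammaIntegral_convergent (show (0:ℝ) < x + 1 by linarith)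
  -- the quadratic function
  set h : ℝ → ℝ := fun t => exp (-t) * t ^ (x - 1) * (c - Real.sqrt t) ^ 2 with hh
  have hexp : ∀ t ∈ Ioi (0:ℝ), h t =
      c ^ 2 * (exp (-t) * t ^ (x - 1)) - 2 * c * (exp (-t) * t ^ (x + 1/2 - 1))
        + exp (-t) * t ^ (x + 1 - 1) := by
    intro t ht
    have ht' : (0:ℝ) < t := ht
    have h1 : t ^ (x + 1/2 - 1) = t ^ (x - 1) * Real.sqrt t := by
      rw [Real.sqrt_eq_rpow, ← Real.rpow_add ht']; ring_nf
    have h2 : t ^ (x + 1 - 1) = t ^ (x - 1) * (Real.sqrt t) ^ 2 := by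
      rw [Real.sq_sqrt ht'.le, ← Real.rpow_add_one ht'.ne']; ring_nf
    rw [hh]; dsimp only; rw [h1, h2]; ring
  -- combination function
  set g : ℝ → ℝ := fun t =>
      c ^ 2 * (exp (-t) * t ^ (x - 1)) - 2 * c * (exp (-t) * t ^ (x + 1/2 - 1))
        + exp (-t) * t ^ (x + 1 - 1) with hg
  have hAB : Integrable (fun t => c^2 * (exp (-t) * t ^ (x-1))
      - 2*c * (exp (-t) * t ^ (x + 1/2 - 1))) (volume.restrict (Ioi 0)) :=
    (I1.const_mul (c^2)).sub (I2.const_mul (2*c))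
  have hgint : IntegrableOn g (Ioi 0) := hAB.add I3
  have hgval : ∫ t in Ioi (0:ℝ), g t
      = c ^ 2 * Gamma x - 2 * c * Gamma (x + 1/2) + Gamma (x + 1) := by
    rw [hg]
    rw [integral_add hAB I3]
    rw [integral_sub (I1.const_mul (c^2)) (I2.const_mul (2*c)),
        integral_const_mul, integral_const_mul,
        ← Real.Gamma_eq_integral hx,
        ← Real.Gamma_eq_integral (show (0:ℝ) < x + 1/2 by linarith),
        ← Real.Gamma_eq_integral (show (0:ℝ) < x + 1 by linarith)]
  have hhg : ∫ t in Ioi (0:ℝ), h t = ∫ t in Ioi (0:ℝ), g t :=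
    setIntegral_congr_fun measurableSet_Ioi hexp
  have hhint : IntegrableOn h (Ioi 0) :=
    hgint.congr_fun (fun t ht => (hexp t ht).symm) measurableSet_Ioi
  -- positivity of ∫ h
  have hab : (c^2 + 1 : ℝ) < c^2 + 2 := by linarith
  have ha0 : (0:ℝ) < c^2 + 1 := by positivity
  have hcont : ContinuousOn h (Icc (c^2+1) (c^2+2)) := by
    apply ContinuousOn.mul
    · exact ContinuousOn.mul (Real.continuous_exp.comp continuous_neg).continuousOn
        (continuousOn_id.rpow_const fun t ht =>
          Or.inl (ne_of_gt (lt_of_lt_of_le ha0 ht.1)))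
    · exact ((continuous_const.sub Real.continuous_sqrt).pow 2).continuousOn
  have hpos : ∀ t ∈ Ioo (c^2+1) (c^2+2), 0 < h t := by
    intro t ht
    have ht0 : (0:ℝ) < t := lt_trans ha0 ht.1
    have hsq : c < Real.sqrt t := by
      have : c = Real.sqrt (c^2) := by rw [Real.sqrt_sq hcpos.le]
      rw [this]
      exact Real.sqrt_lt_sqrt (by positivity) (by linarith [ht.1])
    have hsq2 : (0:ℝ) < (c - Real.sqrt t) ^ 2 :=
      pow_two_pos_of_ne_zero (sub_ne_zero.mpr hsq.ne)
    exact mul_pos (mul_pos (exp_pos _) (Real.rpow_pos_of_pos ht0 _)) hsq2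
  have hsub : Ioc (c^2+1) (c^2+2) ⊆ Ioi (0:ℝ) := fun t ht => lt_trans ha0 ht.1
  have key : 0 < ∫ t in Ioi (0:ℝ), h t := by
    have h1 : 0 < ∫ t in (c^2+1)..(c^2+2), h t := by
      refine intervalIntegral.intervalIntegral_pos_of_pos_on ?_ hpos hab
      exact (hcont.mono (by rw [uIcc_of_le hab.le])).intervalIntegrable
    rw [intervalIntegral.integral_of_le hab.le] at h1
    refine lt_of_lt_of_le h1 ?_
    refine setIntegral_mono_set hhint ?_ (HasSubset.Subset.eventuallyLE hsub)
    filter_upwards [ae_restrict_mem measurableSet_Ioi] with t ht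
    have ht0 : (0:ℝ) < t := ht
    simp only [Pi.zero_apply, hh]
    exact mul_nonneg (mul_nonneg (exp_pos _).le (Real.rpow_nonneg ht0.le _)) (sq_nonneg _)
  rw [hhg, hgval] at key
  have : Gamma (x + 1/2) ^ 2 / Gamma x < Gamma (x + 1) := by
    have hcc : c ^ 2 * Gamma x - 2 * c * Gamma (x + 1/2)
        = - (Gamma (x + 1/2) ^ 2 / Gamma x) := by
      rw [hc]; field_simp; ring
    nlinarith [key, hcc]
  calc Gamma (x + 1/2) ^ 2 = (Gamma (x + 1/2) ^ 2 / Gamma x) * Gamma x := by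
        field_simp
    _ < Gamma (x + 1) * Gamma x := by
        exact mul_lt_mul_of_pos_right this hΓx
    _ = Gamma x * Gamma (x + 1) := mul_comm _ _

/-- For `x > 0`, the Gamma function satisfies `Γ(x + 1/2) < √x · Γ(x)`. -/
theorem gamma_add_half_lt (x : ℝ) (hx : 0 < x) :
    Gamma (x + 1 / 2) < Real.sqrt x * Gamma x := by
  have hsq := gamma_sq_lt x hx
  have hΓx : 0 < Gamma x := Real.Gamma_pos_of_pos hx
  have h2 : Gamma (x + 1 / 2) ^ 2 < (Real.sqrt x * Gamma x) ^ 2 := by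
    rw [mul_pow, Real.sq_sqrt hx.le, Real.Gamma_add_one hx.ne'] at *
    nlinarith [hsq]
  have hpos : 0 ≤ Real.sqrt x * Gamma x := by positivity
  exact lt_of_pow_lt_pow_left₀ 2 hpos h2
end

section
/- Let n ≥ 3, 0 ≤ α ≤ π/2, and t := 1/sin α. If t > n^{3/2}, then Σ_{i=0}^{n−2} C(n−2,i) · n^{i/2} · I_{n,n−2−i}(α) < 3/t, where I_{n,k}(α) := ∫_0^α cos(ρ)^k sin(ρ)^{n−2−k} dρ. -/
/-!
On `[0, α] ⊆ [0, π/2]` we have `0 ≤ sin ρ ≤ sin α` and `0 ≤ cos ρ ≤ 1`, so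
`I_{n,n-2-i}(α) ≤ sin α ^ (i + 1)`: bound the integrand by `sin α ^ i * cos ρ` when a cosine is
present, and by `sin α ^ (i - 1) * sin ρ` otherwise, using `1 - cos α ≤ sin α ^ 2`. By the binomial
theorem the sum is then at most `sin α * (√n sin α + 1) ^ (n - 2)`, and `t > n^{3/2}` says
`√n sin α < 1/n`, so the power is below `(1 + 1/n) ^ n ≤ e < 3`.
-/

open Real Finset

section SinCosIntegrals

variable {α : ℝ}

theorem integral_cos_pow_mul_sin_pow_le_of_ne_zero {j : ℕ} (k : ℕ) (hj : j ≠ 0) (hα0 : 0 ≤ α)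
    (hα1 : α ≤ π / 2) :
    ∫ ρ in (0)..α, cos ρ ^ j * sin ρ ^ k ≤ sin α ^ (k + 1) := by
  calc ∫ ρ in (0)..α, cos ρ ^ j * sin ρ ^ k
      ≤ ∫ ρ in (0)..α, sin α ^ k * cos ρ := by
        refine intervalIntegral.integral_mono_on hα0
          ((by fun_prop : Continuous _).intervalIntegrable _ _)
          ((by fun_prop : Continuous _).intervalIntegrable _ _) fun ρ hρ ↦ ?_
        have hcos : 0 ≤ cos ρ := cos_nonneg_of_mem_Icc ⟨by linarith [hρ.1], by linarith [hρ.2]⟩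
        have hsin : 0 ≤ sin ρ := sin_nonneg_of_nonneg_of_le_pi hρ.1 (by linarith [hρ.2])
        have hsin_le : sin ρ ≤ sin α :=
          sin_le_sin_of_le_of_le_pi_div_two (by linarith [hρ.1]) hα1 hρ.2
        rw [mul_comm]
        exact mul_le_mul (pow_le_pow_left₀ hsin hsin_le k) (pow_le_of_le_one hcos (cos_le_one ρ) hj)
          (pow_nonneg hcos j) (pow_nonneg (hsin.trans hsin_le) k)
    _ = sin α ^ (k + 1) := by simp [integral_cos, pow_succ]

theorem integral_sin_pow_le {k : ℕ} (hk : k ≠ 0) (hα0 : 0 ≤ α) (hα1 : α ≤ π / 2) :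
    ∫ ρ in (0)..α, sin ρ ^ k ≤ sin α ^ (k + 1) := by
  obtain ⟨l, rfl⟩ := Nat.exists_eq_succ_of_ne_zero hk
  have hcos : 0 ≤ cos α := cos_nonneg_of_mem_Icc ⟨by linarith [pi_pos], hα1⟩
  have hsin : 0 ≤ sin α := sin_nonneg_of_nonneg_of_le_pi hα0 (by linarith [pi_pos])
  calc ∫ ρ in (0)..α, sin ρ ^ (l + 1)
      ≤ ∫ ρ in (0)..α, sin α ^ l * sin ρ := by
        refine intervalIntegral.integral_mono_on hα0
          ((by fun_prop : Continuous _).intervalIntegrable _ _)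
          ((by fun_prop : Continuous _).intervalIntegrable _ _) fun ρ hρ ↦ ?_
        have hsinρ : 0 ≤ sin ρ := sin_nonneg_of_nonneg_of_le_pi hρ.1 (by linarith [hρ.2])
        rw [pow_succ]
        gcongr
        exact sin_le_sin_of_le_of_le_pi_div_two (by linarith [hρ.1]) hα1 hρ.2
    _ = sin α ^ l * (1 - cos α) := by simp [integral_sin]
    _ ≤ sin α ^ l * sin α ^ 2 := by
        gcongr
        nlinarith [sin_sq_add_cos_sq α, cos_le_one α]
    _ = sin α ^ (l + 1 + 1) := by ring

theorem integral_cos_pow_mul_sin_pow_le {j k : ℕ} (hjk : j ≠ 0 ∨ k ≠ 0) (hα0 : 0 ≤ α)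
    (hα1 : α ≤ π / 2) :
    ∫ ρ in (0)..α, cos ρ ^ j * sin ρ ^ k ≤ sin α ^ (k + 1) := by
  rcases eq_or_ne j 0 with rfl | hj
  · simpa using integral_sin_pow_le (hjk.resolve_left (not_not_intro rfl)) hα0 hα1
  · exact integral_cos_pow_mul_sin_pow_le_of_ne_zero k hj hα0 hα1

end SinCosIntegrals

theorem sum_choose_mul_pow_mul_pow_succ {R : Type*} [CommSemiring R] (m : ℕ) (x s : R) :
    ∑ i ∈ range (m + 1), (m.choose i : R) * x ^ i * s ^ (i + 1) = s * (x * s + 1) ^ m := by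
  rw [add_pow, mul_sum]
  refine sum_congr rfl fun i _ ↦ ?_
  ring

theorem one_add_inv_pow_lt_three {n k : ℕ} (hk : k ≤ n) : (1 + (n : ℝ)⁻¹) ^ k < 3 :=
  calc (1 + (n : ℝ)⁻¹) ^ k ≤ (1 + (n : ℝ)⁻¹) ^ n :=
        pow_le_pow_right₀ (le_add_of_nonneg_right (by positivity)) hk
    _ ≤ exp 1 := one_add_inv_pow_le_exp
    _ < 3 := exp_one_lt_three

theorem sqrt_mul_lt_inv_of_rpow_three_halves_lt {n s : ℝ} (hn : 0 < n) (hs : 0 < s)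
    (h : n ^ ((3 : ℝ) / 2) < 1 / s) : √n * s < n⁻¹ := by
  have h3 : n ^ ((3 : ℝ) / 2) = n * √n := by
    rw [rpow_div_two_eq_sqrt _ hn.le, show (3 : ℝ) = (3 : ℕ) by norm_num, rpow_natCast,
      pow_succ, sq_sqrt hn.le]
  rw [h3, lt_div_iff₀ hs] at h
  rw [← one_div, lt_div_iff₀ hn]
  linarith

/-- Let `n ≥ 3`, `0 ≤ α ≤ π/2`, and `t := 1/sin α`.  If `t > n^{3/2}`, then
`Σ_{i=0}^{n−2} C(n−2,i) · n^{i/2} · I_{n,n−2−i}(α) < 3/t`, where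
`I_{n,k}(α) := ∫_0^α cos(ρ)^k sin(ρ)^{n−2−k} dρ`. -/
theorem sum_binom_I_bound (n : ℕ) (hn : 3 ≤ n) (α : ℝ) (hα0 : 0 ≤ α) (hα1 : α ≤ π / 2)
    (t : ℝ) (ht : t = 1 / Real.sin α) (htn : t > (n : ℝ) ^ ((3 : ℝ) / 2)) :
    ∑ i ∈ range (n - 1), ((n - 2).choose i : ℝ) * (n : ℝ) ^ ((i : ℝ) / 2) *
        ∫ ρ in (0)..α, Real.cos ρ ^ (n - 2 - i) * Real.sin ρ ^ i
      < 3 / t := by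
  have hn0 : (0 : ℝ) < n := by positivity
  have hs : 0 < sin α := one_div_pos.1 (ht ▸ (rpow_pos_of_pos hn0 _).trans htn)
  have hsqrt : √n * sin α < (n : ℝ)⁻¹ :=
    sqrt_mul_lt_inv_of_rpow_three_halves_lt hn0 hs (ht ▸ htn)
  calc _ ≤ ∑ i ∈ range (n - 2 + 1), ((n - 2).choose i : ℝ) * √n ^ i * sin α ^ (i + 1) := by
        rw [show n - 1 = n - 2 + 1 by omega]
        refine sum_le_sum fun i hi ↦ ?_
        rw [rpow_div_two_eq_sqrt _ hn0.le, rpow_natCast]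
        have hi : i ≤ n - 2 := Nat.lt_succ_iff.1 (mem_range.1 hi)
        gcongr
        exact integral_cos_pow_mul_sin_pow_le (by omega) hα0 hα1
    _ = sin α * (√n * sin α + 1) ^ (n - 2) := sum_choose_mul_pow_mul_pow_succ _ _ _
    _ ≤ sin α * (1 + (n : ℝ)⁻¹) ^ (n - 2) := by
        gcongr sin α * ?_ ^ _; linarith
    _ < sin α * 3 := by gcongr; exact one_add_inv_pow_lt_three (by omega)
    _ = 3 / t := by rw [ht]; field_simp
end

section
/- Let n ≥ 3, 1 ≤ m ≤ n−1, 0 ≤ α ≤ π/2 and t := 1/sin α. If t > m, then Σ_{i=0}^{n−2} C(n−2,i) · I_{n,n−2−i}(α) < exp(n/m) · (1/t), where I_{n,k}(α) := ∫_0^α cos(ρ)^k sin(ρ)^{n−2−k} dρ. -/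
/-!
By the binomial theorem the sum is `∫₀^α (sin ρ + cos ρ)^(n-2) dρ ≤ (1 + s)^(n-2) · α` with
`s = sin α = 1/t < 1/m`, and `(1 + s)^(n-2) ≤ exp ((n-2) s)`. It remains to compare `α` with `s`.
For `m ≥ 2` we have `s < 1/2`, so `α ≤ tan α = s / cos α ≤ s · exp (2 s)`, giving the bound
`exp (n s) · s < exp (n/m) · s`. For `m = 1` Jordan's inequality `α ≤ (π/2) s` and `π/2 < e²`
give `exp (n-2) · (π/2) · s < exp n · s`.
-/

open Real Finset

theorem sum_choose_mul_integral_pow_mul_pow {f g : ℝ → ℝ} (hf : Continuous f)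
    (hg : Continuous g) (N : ℕ) (a b : ℝ) :
    ∑ i ∈ range (N + 1), (N.choose i : ℝ) * ∫ x in a..b, g x ^ (N - i) * f x ^ i
      = ∫ x in a..b, (f x + g x) ^ N := by
  simp_rw [← intervalIntegral.integral_const_mul]
  rw [← intervalIntegral.integral_finsetSum fun i _ ↦ by
    apply Continuous.intervalIntegrable; fun_prop]
  congr 1 with x
  rw [add_pow]
  exact sum_congr rfl fun i _ ↦ by ring

theorem one_add_pow_le_exp_mul {s : ℝ} (hs : -1 ≤ s) (N : ℕ) :
    (1 + s) ^ N ≤ exp (N * s) := by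
  rw [exp_nat_mul]
  exact pow_le_pow_left₀ (by linarith) (by linarith [add_one_le_exp s]) N

theorem integral_sin_add_cos_pow_le {α : ℝ} (hα0 : 0 ≤ α) (hα1 : α ≤ π / 2) (N : ℕ) :
    ∫ ρ in (0)..α, (sin ρ + cos ρ) ^ N ≤ (1 + sin α) ^ N * α := by
  have hbound : ∀ ρ ∈ Set.Icc 0 α, (sin ρ + cos ρ) ^ N ≤ (1 + sin α) ^ N := by
    rintro ρ ⟨hρ0, hρα⟩
    have hsin : 0 ≤ sin ρ := sin_nonneg_of_nonneg_of_le_pi hρ0 (by linarith [pi_pos])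
    have hcos : 0 ≤ cos ρ := cos_nonneg_of_mem_Icc ⟨by linarith [pi_pos], by linarith⟩
    have hmono : sin ρ ≤ sin α :=
      sin_le_sin_of_le_of_le_pi_div_two (by linarith [pi_pos]) hα1 hρα
    exact pow_le_pow_left₀ (by positivity) (by linarith [cos_le_one ρ]) N
  simpa [mul_comm] using intervalIntegral.integral_mono_on (μ := MeasureTheory.volume) hα0
    (Continuous.intervalIntegrable (by fun_prop) _ _) intervalIntegrable_const hbound

theorem exp_neg_two_mul_sin_le_cos {α : ℝ} (hα0 : 0 ≤ α) (hα1 : α ≤ π / 2)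
    (hs : sin α ≤ 1 / 2) : exp (-(2 * sin α)) ≤ cos α := by
  have hs0 : 0 ≤ sin α := sin_nonneg_of_nonneg_of_le_pi hα0 (by linarith [pi_pos])
  have hcos : 0 ≤ cos α := cos_nonneg_of_mem_Icc ⟨by linarith [pi_pos], hα1⟩
  -- `exp (-4 s) ≤ 1 / (1 + 4 s) ≤ 1 - s ^ 2 = cos α ^ 2` for `0 ≤ s ≤ 1 / 2`
  have hsq : exp (-(2 * sin α)) ^ 2 ≤ cos α ^ 2 := by
    rw [← exp_nat_mul, cos_sq', show (2 : ℕ) * -(2 * sin α) = -(4 * sin α) by push_cast; ring,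
      exp_neg]
    rw [inv_le_iff_one_le_mul₀ (exp_pos _)]
    have hexp : (1 - sin α ^ 2) * (4 * sin α + 1) ≤ (1 - sin α ^ 2) * exp (4 * sin α) :=
      mul_le_mul_of_nonneg_left (add_one_le_exp _) (by nlinarith)
    nlinarith [mul_nonneg hs0 (by nlinarith : (0 : ℝ) ≤ 4 - sin α - 4 * sin α ^ 2)]
  exact (pow_le_pow_iff_left₀ (exp_pos _).le hcos two_ne_zero).mp hsq

theorem one_add_sin_pow_mul_le_exp_mul_sin {α : ℝ} (hα0 : 0 ≤ α) (hα1 : α ≤ π / 2)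
    (hs : sin α ≤ 1 / 2) (N : ℕ) :
    (1 + sin α) ^ N * α ≤ exp ((N + 2) * sin α) * sin α := by
  have hs0 : 0 ≤ sin α := sin_nonneg_of_nonneg_of_le_pi hα0 (by linarith [pi_pos])
  have hα : α < π / 2 := hα1.lt_of_ne (by rintro rfl; norm_num at hs)
  have hcos := exp_neg_two_mul_sin_le_cos hα0 hα1 hs
  have htan : α ≤ sin α * exp (2 * sin α) := by
    calc α ≤ sin α / cos α := tan_eq_sin_div_cos α ▸ le_tan hα0 hα
      _ ≤ sin α / exp (-(2 * sin α)) := div_le_div_of_nonneg_left hs0 (exp_pos _) hcos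
      _ = sin α * exp (2 * sin α) := by rw [exp_neg, div_inv_eq_mul]
  calc (1 + sin α) ^ N * α ≤ exp (N * sin α) * (sin α * exp (2 * sin α)) :=
        mul_le_mul (one_add_pow_le_exp_mul (by linarith) N) htan hα0 (exp_pos _).le
    _ = exp ((N + 2) * sin α) * sin α := by rw [add_mul, exp_add]; ring

theorem one_add_sin_pow_mul_lt_exp_mul_sin {α : ℝ} (hα0 : 0 ≤ α) (hα1 : α ≤ π / 2)
    (hs : 0 < sin α) (N : ℕ) :
    (1 + sin α) ^ N * α < exp (N + 2) * sin α := by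
  have hjordan : α ≤ π / 2 * sin α := by
    have := mul_le_sin hα0 hα1
    rw [div_mul_eq_mul_div, div_le_iff₀ pi_pos] at this
    linarith
  have hpi : π / 2 < exp 2 := by
    linarith [pi_lt_four, add_one_le_exp (2 : ℝ)]
  calc (1 + sin α) ^ N * α ≤ exp N * (π / 2 * sin α) := by
        refine mul_le_mul ?_ hjordan hα0 (exp_pos _).le
        refine (one_add_pow_le_exp_mul (by linarith) N).trans (exp_le_exp.mpr ?_)
        nlinarith [sin_le_one α]
    _ < exp N * (exp 2 * sin α) := by gcongr
    _ = exp (N + 2) * sin α := by rw [exp_add]; ring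

theorem sum_binom_I_bound'_general (n m : ℕ) (hn : 3 ≤ n) (hm1 : 1 ≤ m)
    (α : ℝ) (hα0 : 0 ≤ α) (hα1 : α ≤ π / 2)
    (t : ℝ) (ht : t = 1 / Real.sin α) (htm : t > (m : ℝ)) :
    ∑ i ∈ range (n - 1), ((n - 2).choose i : ℝ) *
        ∫ ρ in (0)..α, Real.cos ρ ^ (n - 2 - i) * Real.sin ρ ^ i
      < Real.exp ((n : ℝ) / m) * (1 / t) := by
  have hm0 : (0 : ℝ) < m := by exact_mod_cast hm1
  have hs0 : 0 < sin α := one_div_pos.mp (ht ▸ hm0.trans htm)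
  have hsm : sin α < 1 / m := by simpa [ht] using one_div_lt_one_div_of_lt hm0 htm
  have hN : ((n - 2 : ℕ) : ℝ) + 2 = n := by push_cast [Nat.cast_sub (by omega : 2 ≤ n)]; ring
  rw [show n - 1 = n - 2 + 1 by omega,
    sum_choose_mul_integral_pow_mul_pow continuous_sin continuous_cos, ht, one_div_one_div]
  refine (integral_sin_add_cos_pow_le hα0 hα1 _).trans_lt ?_
  obtain rfl | hm := hm1.eq_or_lt
  · simpa [hN] using one_add_sin_pow_mul_lt_exp_mul_sin hα0 hα1 hs0 (n - 2)
  · have hs : sin α ≤ 1 / 2 :=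
      hsm.le.trans (one_div_le_one_div_of_le two_pos (by exact_mod_cast hm))
    calc _ ≤ exp (n * sin α) * sin α := hN ▸ one_add_sin_pow_mul_le_exp_mul_sin hα0 hα1 hs _
      _ < exp (n / m) * sin α := by
        rw [← mul_one_div (n : ℝ)]
        gcongr

/-- Let `n ≥ 3`, `1 ≤ m ≤ n−1`, `0 ≤ α ≤ π/2` and `t := 1/sin α`.  If `t > m`, then
`Σ_{i=0}^{n−2} C(n−2,i) · I_{n,n−2−i}(α) < exp(n/m) · (1/t)`, where
`I_{n,k}(α) := ∫_0^α cos(ρ)^k sin(ρ)^{n−2−k} dρ`. -/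
theorem sum_binom_I_bound' (n m : ℕ) (hn : 3 ≤ n) (hm1 : 1 ≤ m) (hm2 : m ≤ n - 1)
    (α : ℝ) (hα0 : 0 ≤ α) (hα1 : α ≤ π / 2)
    (t : ℝ) (ht : t = 1 / Real.sin α) (htm : t > (m : ℝ)) :
    ∑ i ∈ range (n - 1), ((n - 2).choose i : ℝ) *
        ∫ ρ in (0)..α, Real.cos ρ ^ (n - 2 - i) * Real.sin ρ ^ i
      < Real.exp ((n : ℝ) / m) * (1 / t) :=
  sum_binom_I_bound'_general n m hn hm1 α hα0 hα1 t ht htm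
end

section
/- Fix integers m ≥ 1 and define g_m(n) := Γ(n/2)·exp(n/m) / (Γ(m/2)·Γ((n−m)/2)·2^{n/2}) for n > m. Then the sequence n ↦ g_m(n) is log-concave: g_m(n)^2 ≥ g_m(n−1)·g_m(n+1) for all n ≥ m+2. -/
/-!
Write `φ(x) = Γ(x - 1/2) Γ(x + 1/2) / Γ(x)²`. The ratio `g(n-1) g(n+1) / g(n)²` equals
`φ(n/2) / φ((n-m)/2)`, so it suffices that `φ` decreases along steps of `1/2`. Since
`φ(x) φ(x + 1/2) = x / (x - 1/2)`, this is the inequality `(x - 1/2) / x · φ(x)² ≥ 1`. The left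
side decreases under `x ↦ x + 1`, because `φ(x + 1) = (1 - 1/(4x²)) φ(x)`, and it is at least
`(x - 1/2) / x → 1`, because `φ ≥ 1` by the log-convexity of `Γ`.
-/

open Real Filter Topology

theorem Real.Gamma_add_half {x : ℝ} (hx : x ≠ 1/2) :
    Gamma (x + 1/2) = (x - 1/2) * Gamma (x - 1/2) := by
  rw [← Gamma_add_one (sub_ne_zero.mpr hx)]
  ring_nf

theorem Real.Gamma_sq_le_Gamma_sub_mul_Gamma_add {x h : ℝ} (h₁ : 0 < x - h) (h₂ : 0 < x + h) :
    Gamma x ^ 2 ≤ Gamma (x - h) * Gamma (x + h) := by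
  have hconv := Gamma_mul_add_mul_le_rpow_Gamma_mul_rpow_Gamma h₁ h₂ one_half_pos one_half_pos
    (add_halves 1)
  rw [show 1 / 2 * (x - h) + 1 / 2 * (x + h) = x by ring, ← mul_rpow (Gamma_pos_of_pos h₁).le
    (Gamma_pos_of_pos h₂).le, ← sqrt_eq_rpow] at hconv
  calc Gamma x ^ 2 ≤ √(Gamma (x - h) * Gamma (x + h)) ^ 2 :=
        pow_le_pow_left₀ (Gamma_pos_of_pos (by linarith)).le hconv 2
    _ = Gamma (x - h) * Gamma (x + h) :=
        sq_sqrt (mul_pos (Gamma_pos_of_pos h₁) (Gamma_pos_of_pos h₂)).le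

noncomputable def gammaHalfRatio (x : ℝ) : ℝ := Gamma (x - 1/2) * Gamma (x + 1/2) / Gamma x ^ 2

lemma gammaHalfRatio_pos {x : ℝ} (hx : 1/2 < x) : 0 < gammaHalfRatio x := by
  have := Gamma_pos_of_pos (s := x - 1/2) (by linarith)
  have := Gamma_pos_of_pos (s := x + 1/2) (by linarith)
  have := Gamma_pos_of_pos (s := x) (by linarith)
  unfold gammaHalfRatio
  positivity

lemma one_le_gammaHalfRatio {x : ℝ} (hx : 1/2 < x) : 1 ≤ gammaHalfRatio x :=
  (one_le_div (pow_pos (Gamma_pos_of_pos (by linarith)) 2)).mpr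
    (Gamma_sq_le_Gamma_sub_mul_Gamma_add (by linarith) (by linarith))

lemma gammaHalfRatio_add_one {x : ℝ} (hx : 1/2 < x) :
    gammaHalfRatio (x + 1) = (x - 1/2) * (x + 1/2) / x ^ 2 * gammaHalfRatio x := by
  have hΓ := Gamma_add_half hx.ne'
  have := Gamma_pos_of_pos (s := x) (by linarith)
  unfold gammaHalfRatio
  rw [show x + 1 - 1/2 = x + 1/2 by ring, show x + 1 + 1/2 = x + 1/2 + 1 by ring,
    Gamma_add_one (by linarith), Gamma_add_one (by linarith), hΓ]
  field_simp

lemma gammaHalfRatio_mul_gammaHalfRatio_add_half {x : ℝ} (hx : 1/2 < x) :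
    gammaHalfRatio x * gammaHalfRatio (x + 1/2) = x / (x - 1/2) := by
  have hΓ := Gamma_add_half hx.ne'
  have := Gamma_pos_of_pos (s := x) (by linarith)
  have := Gamma_pos_of_pos (s := x - 1/2) (by linarith)
  have : x - 1/2 ≠ 0 := by linarith
  unfold gammaHalfRatio
  rw [show x + 1/2 - 1/2 = x by ring, show x + 1/2 + 1/2 = x + 1 by ring,
    Gamma_add_one (by linarith), hΓ]
  generalize Gamma (x - 1/2) = A at *
  field_simp

lemma gammaHalfRatio_sq_add_one_le {x : ℝ} (hx : 1/2 < x) :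
    (x + 1 - 1/2) / (x + 1) * gammaHalfRatio (x + 1) ^ 2 ≤
      (x - 1/2) / x * gammaHalfRatio x ^ 2 := by
  rw [gammaHalfRatio_add_one hx, mul_pow, ← mul_assoc]
  gcongr ?_ * _
  have hx₀ : 0 < x := by linarith
  have hx₁ : 0 < x - 1/2 := by linarith
  rw [div_pow, div_mul_div_comm, div_le_div_iff₀ (by positivity) hx₀]
  nlinarith [mul_pos (mul_pos hx₁ hx₀) hx₀, mul_pos hx₁ hx₀]

lemma one_le_sub_half_div_mul_gammaHalfRatio_sq {x : ℝ} (hx : 1/2 < x) :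
    1 ≤ (x - 1/2) / x * gammaHalfRatio x ^ 2 := by
  have hxk (k : ℕ) : 1/2 < x + k := by linarith [k.cast_nonneg (α := ℝ)]
  set a : ℕ → ℝ := fun k => (x + k - 1/2) / (x + k) * gammaHalfRatio (x + k) ^ 2 with ha
  have ha_anti : Antitone a := antitone_nat_of_succ_le fun k => by
    simpa only [ha, Nat.cast_succ, add_assoc] using gammaHalfRatio_sq_add_one_le (hxk k)
  have ha_lower (k : ℕ) : (x + k - 1/2) / (x + k) ≤ a k :=
    le_mul_of_one_le_right (div_nonneg (by linarith [hxk k]) (by linarith [hxk k]))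
      (one_le_pow₀ (one_le_gammaHalfRatio (hxk k)))
  have hlim : Tendsto (fun k : ℕ => (x + k - 1/2) / (x + k)) atTop (𝓝 1) := by
    simpa [add_sub_right_comm] using
      tendsto_add_mul_div_add_mul_atTop_nhds (x - 1/2) x 1 one_ne_zero
  simpa [ha] using le_of_tendsto' hlim fun k => (ha_lower k).trans (ha_anti k.zero_le)

lemma gammaHalfRatio_add_half_le {x : ℝ} (hx : 1/2 < x) :
    gammaHalfRatio (x + 1/2) ≤ gammaHalfRatio x := by
  have hφ := gammaHalfRatio_pos hx
  have h := one_le_sub_half_div_mul_gammaHalfRatio_sq hx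
  refine le_of_mul_le_mul_left ?_ hφ
  rw [gammaHalfRatio_mul_gammaHalfRatio_add_half hx, div_le_iff₀ (by linarith)]
  rw [div_mul_eq_mul_div, one_le_div (by linarith)] at h
  linarith

lemma gammaHalfRatio_add_nat_div_two_le {x : ℝ} (hx : 1/2 < x) (k : ℕ) :
    gammaHalfRatio (x + k / 2) ≤ gammaHalfRatio x := by
  induction k with
  | zero => simp
  | succ k ih =>
    have hxk : 1/2 < x + k / 2 := by linarith [k.cast_nonneg (α := ℝ)]
    calc gammaHalfRatio (x + (k + 1 : ℕ) / 2) = gammaHalfRatio (x + k / 2 + 1/2) := by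
          push_cast; ring_nf
      _ ≤ gammaHalfRatio x := (gammaHalfRatio_add_half_le hxk).trans ih

noncomputable def gReal (m : ℕ) (ν : ℝ) : ℝ :=
  Gamma (ν / 2) * exp (ν / m) / (Gamma ((m : ℝ) / 2) * Gamma ((ν - m) / 2) * 2 ^ (ν / 2))

lemma gReal_sub_one_mul_gReal_add_one (m : ℕ) {ν : ℝ} (hν : m + 1 < ν) :
    gReal m (ν - 1) * gReal m (ν + 1) =
      gReal m ν ^ 2 * (gammaHalfRatio (ν / 2) / gammaHalfRatio ((ν - m) / 2)) := by
  have hm := m.cast_nonneg (α := ℝ)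
  have := Gamma_pos_of_pos (s := ν / 2) (by linarith)
  have := Gamma_pos_of_pos (s := (ν - m) / 2) (by linarith)
  have := Gamma_pos_of_pos (s := (ν - m) / 2 - 1/2) (by linarith)
  have := Gamma_pos_of_pos (s := (ν - m) / 2 + 1/2) (by linarith)
  have := Gamma_pos_of_pos (s := ν / 2 - 1/2) (by linarith)
  have := Gamma_pos_of_pos (s := ν / 2 + 1/2) (by linarith)
  unfold gReal gammaHalfRatio
  rw [show (ν - 1) / 2 = ν / 2 - 1/2 by ring, show (ν + 1) / 2 = ν / 2 + 1/2 by ring,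
    show (ν - 1 - m) / 2 = (ν - m) / 2 - 1/2 by ring,
    show (ν + 1 - m) / 2 = (ν - m) / 2 + 1/2 by ring,
    show (ν - 1) / m = ν / m - 1 / m by ring, show (ν + 1) / m = ν / m + 1 / m by ring,
    exp_sub, exp_add, rpow_sub two_pos, rpow_add two_pos]
  have := exp_pos (1 / m)
  have := rpow_pos_of_pos two_pos (ν / 2)
  have := rpow_pos_of_pos two_pos (1 / 2)
  field_simp

lemma gReal_sub_one_mul_gReal_add_one_le (m : ℕ) {ν : ℝ} (hν : m + 1 < ν) :
    gReal m (ν - 1) * gReal m (ν + 1) ≤ gReal m ν ^ 2 := by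
  have hy : 1/2 < (ν - m) / 2 := by linarith
  rw [gReal_sub_one_mul_gReal_add_one m hν]
  refine mul_le_of_le_one_right (sq_nonneg _) ((div_le_one (gammaHalfRatio_pos hy)).mpr ?_)
  simpa [sub_div, sub_add_cancel] using gammaHalfRatio_add_nat_div_two_le hy m

theorem g_log_concave_general (m : ℕ)
    (g : ℕ → ℝ)
    (hg : ∀ n : ℕ, m < n →
      g n = Gamma ((n : ℝ) / 2) * Real.exp ((n : ℝ) / m) /
        (Gamma ((m : ℝ) / 2) * Gamma (((n : ℝ) - m) / 2) * 2 ^ ((n : ℝ) / 2)))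
    (n : ℕ) (hn : m + 2 ≤ n) :
    g n ^ 2 ≥ g (n - 1) * g (n + 1) := by
  have hg' : ∀ n : ℕ, m < n → g n = gReal m n := hg
  have hν : (m : ℝ) + 1 < n := by exact_mod_cast hn
  rw [hg' n (by omega), hg' (n - 1) (by omega), hg' (n + 1) (by omega),
    Nat.cast_sub (by omega : 1 ≤ n), Nat.cast_one, Nat.cast_succ]
  exact gReal_sub_one_mul_gReal_add_one_le m hν

/-- For a fixed integer `m ≥ 1`, the sequence
`g_m(n) := Γ(n/2)·exp(n/m) / (Γ(m/2)·Γ((n−m)/2)·2^{n/2})` (for `n > m`)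
is log-concave: `g_m(n)^2 ≥ g_m(n−1)·g_m(n+1)` for all `n ≥ m+2`. -/
theorem g_log_concave (m : ℕ) (hm : 1 ≤ m)
    (g : ℕ → ℝ)
    (hg : ∀ n : ℕ, m < n →
      g n = Gamma ((n : ℝ) / 2) * Real.exp ((n : ℝ) / m) /
        (Gamma ((m : ℝ) / 2) * Gamma (((n : ℝ) - m) / 2) * 2 ^ ((n : ℝ) / 2)))
    (n : ℕ) (hn : m + 2 ≤ n) :
    g n ^ 2 ≥ g (n - 1) * g (n + 1) :=
  g_log_concave_general m g hg n hn
end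

section
/- For integers m ≥ 8 and n > m, g_m(n) := Γ(n/2)·exp(n/m) / (Γ(m/2)·Γ((n−m)/2)·2^{n/2}) satisfies g_m(n) < 2.5·√m. -/
open Real

/-!
Writing `g m n` for `g_m(n)`, the ratio `g m (n + 2) / g m n = n e^{2/m} / (2 (n - m))` is at
least `1` for `n ≤ 2m + 4` and at most `1` for `n ≥ 2m + 8` (using `e^x ≤ 1 / (1 - x)` and
`m ≥ 8`), so along each parity class `g m n` is largest at some `n = 2m + k` with `5 ≤ k ≤ 9`.
Legendre's duplication formula and the log-convexity bound `Γ(x + 1/2) ≤ √x Γ(x)` give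
`g m (2m) ≤ c e²` and `g m (2m + 1) ≤ c e^{2 + 1/m}` with `c = √m / (2√(2π))`; multiplying by
the ratios leaves, for each `k`, an inequality between `e^{k/m}` and a rational function of `m`,
settled by bounding `e^{k/m}` by its chord on `[0, k/8]`.
-/

theorem Real.Gamma_add_half_le_sqrt_mul_Gamma {x : ℝ} (hx : 0 < x) :
    Gamma (x + 1 / 2) ≤ √x * Gamma x := by
  have h := Gamma_mul_add_mul_le_rpow_Gamma_mul_rpow_Gamma hx (add_pos hx one_pos)
    (a := 1 / 2) (b := 1 / 2) (by norm_num) (by norm_num) (by norm_num)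
  rw [Gamma_add_one hx.ne', ← sqrt_eq_rpow, ← sqrt_eq_rpow, sqrt_mul hx.le, mul_left_comm,
    mul_self_sqrt (Gamma_pos_of_pos hx).le] at h
  convert h using 2
  ring

theorem Real.exp_le_one_add_mul_of_le {x c : ℝ} (hx : 0 < x) (hxc : x ≤ c) :
    exp x ≤ 1 + (exp c - 1) / c * x := by
  have h := convexOn_exp.secant_mono (Set.mem_univ 0) (Set.mem_univ x) (Set.mem_univ c)
    hx.ne' (hx.trans_le hxc).ne' hxc
  rw [exp_zero, sub_zero, sub_zero, div_le_iff₀ hx] at h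
  linarith

theorem Real.exp_le_of_pow_le {q r : ℝ} (k l : ℕ) (hl : l ≠ 0) (hq : q * l = k) (hr : 0 ≤ r)
    (h : 2.7182818286 ^ k ≤ r ^ l) : exp q ≤ r := by
  refine le_of_pow_le_pow_left₀ hl hr ?_
  rw [← exp_nat_mul, mul_comm, hq, ← exp_one_pow]
  exact (pow_le_pow_left₀ (exp_pos 1).le exp_one_lt_d9.le k).trans h

theorem lt_of_window_lt_of_unimodal {f : ℕ → ℝ} {B : ℝ} {c a b : ℕ} (hab : a ≤ b)
    (hup : ∀ n, c < n → n < a → f n ≤ f (n + 2))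
    (hdown : ∀ n, b ≤ n → f (n + 2) ≤ f n)
    (hwindow : ∀ n, a ≤ n → n < b + 2 → f n < B) : ∀ n, c < n → f n < B := by
  have high : ∀ n, a ≤ n → f n < B := by
    intro n
    induction n using Nat.strong_induction_on with
    | _ n ih =>
      intro hn
      by_cases hnb : n < b + 2
      · exact hwindow n hn hnb
      obtain ⟨k, rfl⟩ : ∃ k, n = k + 2 := ⟨n - 2, by omega⟩
      exact (hdown k (by omega)).trans_lt (ih k (by omega) (by omega))
  have low : ∀ d n, c < n → a ≤ n + 2 * d → f n < B := by
    intro d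
    induction d with
    | zero => exact fun n _ hn => high n hn
    | succ d ih =>
      intro n hcn hn
      by_cases han : a ≤ n
      · exact high n han
      exact (hup n hcn (by omega)).trans_lt (ih (n + 2) (by omega) (by omega))
  exact fun n hn => low a n hn (by omega)

namespace GammaRatio

noncomputable def g (m n : ℝ) : ℝ :=
  Gamma (n / 2) * exp (n / m) / (Gamma (m / 2) * Gamma ((n - m) / 2) * 2 ^ (n / 2))

theorem g_pos {m n : ℝ} (hm : 0 < m) (hn : m < n) : 0 < g m n := by
  have := Gamma_pos_of_pos (by linarith : 0 < n / 2)
  have := Gamma_pos_of_pos (by linarith : 0 < m / 2)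
  have := Gamma_pos_of_pos (by linarith : 0 < (n - m) / 2)
  unfold g
  positivity

theorem g_add_two {m n : ℝ} (hm : 0 < m) (hn : m < n) :
    g m (n + 2) = g m n * (n * exp (2 / m) / (2 * (n - m))) := by
  have hnm : 0 < (n - m) / 2 := by linarith
  have h1 : Gamma ((n + 2) / 2) = n / 2 * Gamma (n / 2) := by
    rw [show (n + 2) / 2 = n / 2 + 1 by ring, Gamma_add_one (by linarith)]
  have h2 : Gamma ((n + 2 - m) / 2) = (n - m) / 2 * Gamma ((n - m) / 2) := by
    rw [show (n + 2 - m) / 2 = (n - m) / 2 + 1 by ring, Gamma_add_one hnm.ne']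
  have h3 : exp ((n + 2) / m) = exp (n / m) * exp (2 / m) := by
    rw [← exp_add, add_div]
  have h4 : (2 : ℝ) ^ ((n + 2) / 2) = 2 ^ (n / 2) * 2 := by
    rw [show (n + 2) / 2 = n / 2 + 1 by ring, rpow_add two_pos, rpow_one]
  have := (Gamma_pos_of_pos (by linarith : 0 < m / 2)).ne'
  have := (Gamma_pos_of_pos hnm).ne'
  have := (rpow_pos_of_pos two_pos (n / 2)).ne'
  have : n - m ≠ 0 := by linarith
  unfold g
  rw [h1, h2, h3, h4]
  field_simp

theorem g_add_two_mul {m n : ℝ} (hm : 0 < m) (hn : m < n) (j : ℕ) :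
    g m (n + 2 * j) =
      g m n * exp (2 * j / m) * ∏ i ∈ Finset.range j, (n + 2 * i) / (2 * (n + 2 * i - m)) := by
  induction j with
  | zero => simp
  | succ j ih =>
    have hj : m < n + 2 * j := by linarith [j.cast_nonneg (α := ℝ)]
    rw [Nat.cast_succ, show n + 2 * (j + 1) = n + 2 * j + 2 by ring, g_add_two hm hj, ih,
      Finset.prod_range_succ, mul_add_one, add_div, exp_add]
    ring

theorem g_two_mul_add {m : ℝ} (hm : 0 < m) {k : ℝ} (hk : 0 ≤ k) :
    g m (2 * m + k) = Gamma (m + k / 2) / Gamma m *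
      (Gamma (m / 2 + 1 / 2) / Gamma (m / 2 + k / 2)) * exp (2 + k / m) /
        (2 ^ (1 + k / 2) * √π) := by
  have hdup : Gamma m = Gamma (m / 2) * Gamma (m / 2 + 1 / 2) * 2 ^ (m - 1) / √π := by
    have := Gamma_mul_Gamma_add_half (m / 2)
    rw [show 2 * (m / 2) = m by ring, show 1 - m = -(m - 1) by ring, rpow_neg two_pos.le] at this
    rw [this]
    field_simp
  have h2 : (2 : ℝ) ^ ((2 * m + k) / 2) = 2 ^ (1 + k / 2) * 2 ^ (m - 1) := by
    rw [← rpow_add two_pos]; ring_nf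
  have := (Gamma_pos_of_pos (by linarith : 0 < m / 2)).ne'
  have := (Gamma_pos_of_pos (by linarith : 0 < m / 2 + 1 / 2)).ne'
  have := (Gamma_pos_of_pos (by linarith : 0 < m / 2 + k / 2)).ne'
  unfold g
  rw [h2, hdup, show (2 * m + k) / 2 = m + k / 2 by ring,
    show (2 * m + k - m) / 2 = m / 2 + k / 2 by ring,
    show (2 * m + k) / m = 2 + k / m by field_simp]
  field_simp

theorem g_two_mul_le {m : ℝ} (hm : 0 < m) : g m (2 * m) ≤ √m / (2 * √(2 * π)) * exp 2 := by
  have hm2 : 0 < m / 2 := by linarith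
  have h := g_two_mul_add hm le_rfl
  simp only [add_zero, zero_div, div_self (Gamma_pos_of_pos hm).ne', one_mul, rpow_one] at h
  have hΓ : Gamma (m / 2 + 1 / 2) / Gamma (m / 2) ≤ √(m / 2) := by
    rw [div_le_iff₀ (Gamma_pos_of_pos hm2)]
    exact Gamma_add_half_le_sqrt_mul_Gamma hm2
  calc g m (2 * m) ≤ √(m / 2) * exp 2 / (2 * √π) := by rw [h]; gcongr
    _ = √m / (2 * √(2 * π)) * exp 2 := by
      rw [sqrt_div' m two_pos.le, sqrt_mul two_pos.le]; field_simp

theorem g_two_mul_add_one_le {m : ℝ} (hm : 0 < m) :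
    g m (2 * m + 1) ≤ √m / (2 * √(2 * π)) * exp (2 + 1 / m) := by
  have hΓ : Gamma (m + 1 / 2) / Gamma m ≤ √m := by
    rw [div_le_iff₀ (Gamma_pos_of_pos hm)]
    exact Gamma_add_half_le_sqrt_mul_Gamma hm
  have h2 : (2 : ℝ) ^ (1 + 1 / 2 : ℝ) = 2 * √2 := by
    rw [rpow_add two_pos, rpow_one, sqrt_eq_rpow]
  rw [g_two_mul_add hm zero_le_one, div_self (Gamma_pos_of_pos (by linarith)).ne', mul_one, h2]
  calc Gamma (m + 1 / 2) / Gamma m * exp (2 + 1 / m) / (2 * √2 * √π)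
      ≤ √m * exp (2 + 1 / m) / (2 * √2 * √π) := by gcongr
    _ = √m / (2 * √(2 * π)) * exp (2 + 1 / m) := by rw [sqrt_mul two_pos.le]; ring

theorem g_two_mul_add_two_mul_le {m : ℝ} (hm : 0 < m) (j : ℕ) :
    g m (2 * m + 2 * j) ≤ √m / (2 * √(2 * π)) *
      (exp (2 + 2 * j / m) * ∏ i ∈ Finset.range j, (m + i) / (m + 2 * i)) := by
  have hprod : ∏ i ∈ Finset.range j, (2 * m + 2 * i) / (2 * (2 * m + 2 * i - m)) =
      ∏ i ∈ Finset.range j, (m + i) / (m + 2 * i) := by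
    refine Finset.prod_congr rfl fun i _ => ?_
    rw [show 2 * m + 2 * (i : ℝ) - m = m + 2 * i by ring,
      show 2 * m + 2 * (i : ℝ) = 2 * (m + i) by ring, mul_div_mul_left _ _ two_ne_zero]
  rw [g_add_two_mul hm (by linarith) j, hprod, exp_add, ← mul_assoc, ← mul_assoc]
  have : 0 ≤ ∏ i ∈ Finset.range j, (m + i) / (m + 2 * i) := by positivity
  gcongr
  exact g_two_mul_le hm

theorem g_two_mul_add_one_add_two_mul_le {m : ℝ} (hm : 0 < m) (j : ℕ) :
    g m (2 * m + 1 + 2 * j) ≤ √m / (2 * √(2 * π)) * (exp (2 + (1 + 2 * j) / m) *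
      ∏ i ∈ Finset.range j, (2 * m + 1 + 2 * i) / (2 * (m + 1 + 2 * i))) := by
  have hprod : ∏ i ∈ Finset.range j, (2 * m + 1 + 2 * i) / (2 * (2 * m + 1 + 2 * i - m)) =
      ∏ i ∈ Finset.range j, (2 * m + 1 + 2 * i) / (2 * (m + 1 + 2 * i)) := by
    refine Finset.prod_congr rfl fun i _ => ?_
    rw [show 2 * m + 1 + 2 * (i : ℝ) - m = m + 1 + 2 * i by ring]
  rw [g_add_two_mul hm (by linarith) j, hprod, add_div, ← add_assoc, exp_add, ← mul_assoc,
    ← mul_assoc]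
  have : 0 ≤ ∏ i ∈ Finset.range j, (2 * m + 1 + 2 * i) / (2 * (m + 1 + 2 * i)) := by positivity
  gcongr
  exact g_two_mul_add_one_le hm

theorem g_le_g_add_two {m n : ℝ} (hm : 0 < m) (hmn : m < n) (hn : n ≤ 2 * m + 4) :
    g m n ≤ g m (n + 2) := by
  rw [g_add_two hm hmn]
  refine le_mul_of_one_le_right (g_pos hm hmn).le ?_
  rw [one_le_div (by linarith)]
  have hexp : n * (1 + 2 / m) ≤ n * exp (2 / m) :=
    mul_le_mul_of_nonneg_left (by linarith [add_one_le_exp (2 / m)]) (by linarith)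
  have hlin : n - 2 * m ≤ 2 * n / m := by
    rw [le_div_iff₀ hm]
    nlinarith [mul_nonneg (mul_nonneg hm.le (by linarith : 0 ≤ m + 2)) (sub_nonneg.2 hn)]
  have : n * (1 + 2 / m) = n + 2 * n / m := by ring
  linarith

theorem g_add_two_le {m n : ℝ} (hm : 8 ≤ m) (hn : 2 * m + 8 ≤ n) : g m (n + 2) ≤ g m n := by
  have hm0 : 0 < m := by linarith
  rw [g_add_two hm0 (by linarith)]
  refine mul_le_of_le_one_right (g_pos hm0 (by linarith)).le ?_
  rw [div_le_one (by linarith)]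
  have hexp : exp (2 / m) ≤ m / (m - 2) := by
    have h := exp_bound_div_one_sub_of_interval (x := 2 / m) (by positivity)
      (by rw [div_lt_one hm0]; linarith)
    rwa [one_sub_div hm0.ne', one_div_div] at h
  calc n * exp (2 / m) ≤ n * (m / (m - 2)) := by gcongr; linarith
    _ ≤ 2 * (n - m) := by
      rw [← mul_div_assoc, div_le_iff₀ (by linarith)]
      nlinarith

theorem g_lt_of_le_mul_exp {m n k r P : ℝ} (hm : 8 ≤ m) (hk : 0 < k) (hr : exp (k / 8) ≤ r)
    (hP : 0 ≤ P) (hg : g m n ≤ √m / (2 * √(2 * π)) * (exp (2 + k / m) * P))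
    (hnum : 7.3891 * (1 + 8 * (r - 1) / m) * P < 12.533) : g m n < 2.5 * √m := by
  have hm0 : 0 < m := by linarith
  have he2 : exp 2 ≤ 7.3891 :=
    exp_le_of_pow_le 2 1 one_ne_zero (by norm_num) (by norm_num) (by norm_num)
  have hchord : exp (k / m) ≤ 1 + 8 * (r - 1) / m := by
    have h := exp_le_one_add_mul_of_le (div_pos hk hm0)
      (div_le_div_of_nonneg_left hk.le (by norm_num) hm)
    have : (exp (k / 8) - 1) / (k / 8) * (k / m) = 8 * (exp (k / 8) - 1) / m := by
      field_simp
    rw [this] at h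
    exact h.trans (by gcongr)
  have hexp : exp (2 + k / m) * P < 12.533 := by
    rw [exp_add]
    calc exp 2 * exp (k / m) * P ≤ 7.3891 * (1 + 8 * (r - 1) / m) * P := by gcongr
      _ < 12.533 := hnum
  have hpi : 12.533 ≤ 5 * √(2 * π) := by
    have : (2.5066 : ℝ) ≤ √(2 * π) := le_sqrt_of_sq_le (by nlinarith [pi_gt_d6])
    linarith
  calc g m n ≤ √m / (2 * √(2 * π)) * (exp (2 + k / m) * P) := hg
    _ < √m / (2 * √(2 * π)) * 12.533 := by gcongr
    _ ≤ 2.5 * √m := by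
      rw [div_mul_eq_mul_div, div_le_iff₀ (by positivity)]
      nlinarith [sqrt_nonneg m]

theorem g_two_mul_add_two_mul_lt {m : ℝ} (hm : 8 ≤ m) {j : ℕ} (hj3 : 3 ≤ j) (hj4 : j ≤ 4) :
    g m (2 * m + 2 * j) < 2.5 * √m := by
  have hm0 : 0 < m := by linarith
  interval_cases j
  on_goal 1 =>
    refine g_lt_of_le_mul_exp hm (r := 2.1171) (by positivity)
      (exp_le_of_pow_le 6 8 (by norm_num) (by norm_num) (by norm_num) (by norm_num))
      (by positivity) (g_two_mul_add_two_mul_le hm0 3) ?_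
  on_goal 2 =>
    refine g_lt_of_le_mul_exp hm (r := 2.7183) (by positivity)
      (exp_le_of_pow_le 8 8 (by norm_num) (by norm_num) (by norm_num) (by norm_num))
      (by positivity) (g_two_mul_add_two_mul_le hm0 4) ?_
  all_goals
    simp only [Finset.prod_range_succ, Finset.prod_range_zero, Nat.cast_ofNat, Nat.cast_zero,
      Nat.cast_one]
    have h8 : 0 ≤ m - 8 := by linarith
    rw [← sub_pos]
    field_simp
    ring_nf
    nlinarith [mul_nonneg h8 h8, mul_nonneg (mul_nonneg h8 h8) h8,
      mul_nonneg (mul_nonneg h8 h8) (mul_nonneg h8 h8)]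

theorem g_two_mul_add_one_add_two_mul_lt {m : ℝ} (hm : 8 ≤ m) {j : ℕ} (hj2 : 2 ≤ j)
    (hj4 : j ≤ 4) :
    g m (2 * m + 1 + 2 * j) < 2.5 * √m := by
  have hm0 : 0 < m := by linarith
  interval_cases j
  on_goal 1 =>
    refine g_lt_of_le_mul_exp hm (r := 1.8683) (by positivity)
      (exp_le_of_pow_le 5 8 (by norm_num) (by norm_num) (by norm_num) (by norm_num))
      (by positivity) (g_two_mul_add_one_add_two_mul_le hm0 2) ?_
  on_goal 2 =>
    refine g_lt_of_le_mul_exp hm (r := 2.3989) (by positivity)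
      (exp_le_of_pow_le 7 8 (by norm_num) (by norm_num) (by norm_num) (by norm_num))
      (by positivity) (g_two_mul_add_one_add_two_mul_le hm0 3) ?_
  on_goal 3 =>
    refine g_lt_of_le_mul_exp hm (r := 3.0803) (by positivity)
      (exp_le_of_pow_le 9 8 (by norm_num) (by norm_num) (by norm_num) (by norm_num))
      (by positivity) (g_two_mul_add_one_add_two_mul_le hm0 4) ?_
  all_goals
    simp only [Finset.prod_range_succ, Finset.prod_range_zero, Nat.cast_ofNat, Nat.cast_zero,
      Nat.cast_one]
    have h8 : 0 ≤ m - 8 := by linarith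
    rw [← sub_pos]
    field_simp
    ring_nf
    nlinarith [mul_nonneg h8 h8, mul_nonneg (mul_nonneg h8 h8) h8,
      mul_nonneg (mul_nonneg h8 h8) (mul_nonneg h8 h8)]

end GammaRatio

/-- For integers `m ≥ 8` and `n > m`,
`g_m(n) := Γ(n/2)·exp(n/m) / (Γ(m/2)·Γ((n−m)/2)·2^{n/2})` satisfies
`g_m(n) < 2.5·√m`. -/
theorem g_lt (m n : ℕ) (hm : 8 ≤ m) (hn : m < n) :
    Gamma ((n : ℝ) / 2) * Real.exp ((n : ℝ) / m) /
        (Gamma ((m : ℝ) / 2) * Gamma (((n : ℝ) - m) / 2) * 2 ^ ((n : ℝ) / 2))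
      < 2.5 * Real.sqrt m := by
  have hm8 : (8 : ℝ) ≤ m := by exact_mod_cast hm
  have hm0 : (0 : ℝ) < m := by linarith
  refine lt_of_window_lt_of_unimodal (f := fun k : ℕ => GammaRatio.g m k) (c := m)
    (a := 2 * m + 5) (b := 2 * m + 8) (by omega) (fun k hmk hk => ?_) (fun k hk => ?_)
    (fun k hk₁ hk₂ => ?_) n hn
  · have := GammaRatio.g_le_g_add_two hm0 (n := k) (by exact_mod_cast hmk)
      (by exact_mod_cast (show k ≤ 2 * m + 4 by omega))
    simpa using this
  · have := GammaRatio.g_add_two_le hm8 (n := k) (by exact_mod_cast hk)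
    simpa using this
  obtain ⟨j, hj | hj⟩ := Nat.even_or_odd' (k - 2 * m)
  · obtain rfl : k = 2 * m + 2 * j := by omega
    simpa using GammaRatio.g_two_mul_add_two_mul_lt hm8 (j := j) (by omega) (by omega)
  · obtain rfl : k = 2 * m + 1 + 2 * j := by omega
    simpa using GammaRatio.g_two_mul_add_one_add_two_mul_lt hm8 (j := j) (by omega) (by omega)
end
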